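/- arXiv:2002.11271 — 4 statements merged into one kernel-verified Lean document; each statement's English description precedes it below -/
import Mathlib

section
/- Let u and v be CNPs of the same dimension n and let f be any cost function. For any position i ∈ [n], the f-distance from u to v is at least the f-distance from u with position i removed to v with position i removed: dist_f(u,v) ≥ dist_f(u^{-{i}}, v^{-{i}}). -/
open scoped ENat

/-- A copy-number profile of dimension `n`: positions are `Fin n` (position `i+1` in 1-based terms),
values are non-negative integers. -/
abbrev CNP (n : ℕ) := Fin n → ℕ

/-- An event `(s, t, δ)`: affects 1-based positions in `[s, t]`, changing copy numbers by `δ`. -/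
abbrev Event := ℕ × ℕ × ℤ

/-- A valid event has `1 ≤ s ≤ t ≤ n` and `δ ≠ 0`. -/
def ValidEvent (n : ℕ) (e : Event) : Prop :=
  1 ≤ e.1 ∧ e.1 ≤ e.2.1 ∧ e.2.1 ≤ n ∧ e.2.2 ≠ 0

/-- Applying event `e = (s,t,δ)` to `u` : each 1-based position `i ∈ [s,t]` with `u_i > 0`
becomes `max(u_i + δ, 0)`; other positions are unchanged. -/
def applyEvent {n : ℕ} (u : CNP n) (e : Event) : CNP n :=
  fun i => if e.1 ≤ (i : ℕ) + 1 ∧ (i : ℕ) + 1 ≤ e.2.1 ∧ 0 < u i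
    then ((u i : ℤ) + e.2.2).toNat else u i

/-- Applying a sequence of events in order. -/
def applySeq {n : ℕ} (u : CNP n) (E : List Event) : CNP n :=
  E.foldl applyEvent u

/-- Cost of applying event `e` on `u` w.r.t. cost function `f`:
the maximum of `f (u_i) δ` over affected positions `i ∈ [s,t]`. -/
noncomputable def eventCost {n : ℕ} (f : ℕ → ℤ → ℕ∞) (u : CNP n) (e : Event) : ℕ∞ :=
  (Finset.univ.filter (fun i : Fin n => e.1 ≤ (i : ℕ) + 1 ∧ (i : ℕ) + 1 ≤ e.2.1)).sup
    (fun i => f (u i) e.2.2)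

/-- Total cost of applying a sequence of events, costs evaluated on successive profiles. -/
noncomputable def seqCost {n : ℕ} (f : ℕ → ℤ → ℕ∞) : CNP n → List Event → ℕ∞
  | _, [] => 0
  | u, e :: E => eventCost f u e + seqCost f (applyEvent u e) E

/-- `dist_f(u,v)`: minimum total cost of a sequence of valid events transforming `u` into `v`
(`⊤` if no such sequence exists). -/
noncomputable def distf {n : ℕ} (f : ℕ → ℤ → ℕ∞) (u v : CNP n) : ℕ∞ :=
  sInf { c | ∃ E : List Event, (∀ e ∈ E, ValidEvent n e) ∧ applySeq u E = v ∧ seqCost f u E = c }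

/-- A unit-cost function takes only values `1` and `∞`. -/
def UnitCost (f : ℕ → ℤ → ℕ∞) : Prop := ∀ c δ, f c δ = 1 ∨ f c δ = ⊤

/-- The most permissive cost function: every event costs `1`. -/
def anyCost : ℕ → ℤ → ℕ∞ := fun _ _ => 1

/-- `dist_any(u,v)`: minimum number of events transforming `u` into `v`. -/
noncomputable def distAny {n : ℕ} (u v : CNP n) : ℕ∞ := distf anyCost u v

/-- The difference vector `w = u - v` in 1-based indexing, extended by `w_0 = w_{n+1} = 0`. -/
def diffExt {n : ℕ} (u v : CNP n) (i : ℕ) : ℤ :=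
  if h : 1 ≤ i ∧ i ≤ n then (u ⟨i - 1, by omega⟩ : ℤ) - (v ⟨i - 1, by omega⟩ : ℤ) else 0

/-- `[a,b] ⊆ [0, n+1]` is a flat interval of `w` if `w` is constant on it. -/
def IsFlat (n : ℕ) (w : ℕ → ℤ) (a b : ℕ) : Prop :=
  a ≤ b ∧ b ≤ n + 1 ∧ ∀ i j, a ≤ i → i ≤ b → a ≤ j → j ≤ b → w i = w j

/-- A maximal flat interval: flat, and not properly contained in a flat interval. -/
def IsMaxFlat (n : ℕ) (w : ℕ → ℤ) (a b : ℕ) : Prop :=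
  IsFlat n w a b ∧ ∀ a' b', a' ≤ a → b ≤ b' → IsFlat n w a' b' → a' = a ∧ b' = b

/-- `|F_w|`: the number of maximal flat intervals of `w` over `[0, n+1]`. -/
noncomputable def numFlat (n : ℕ) (w : ℕ → ℤ) : ℕ :=
  Nat.card {p : ℕ × ℕ // IsMaxFlat n w p.1 p.2}


/-!
Deleting position `i` turns every event `(s, t, δ)` into the event on the same positions of the
shorter profile: its endpoints shift down by one past `i`, and it disappears when it touched only
`i`. Applying the shifted events to `u^{-{i}}` yields `w^{-{i}}` for every intermediate profile `w`,
and each shifted event ranges over a subset of the positions of the original one, so it costs no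
more. Hence every transformation of `u` into `v` induces one of `u^{-{i}}` into `v^{-{i}}` of at
most the same cost.
-/

open Fin

/-- The event `e` seen on the profile from which the 1-based position `q` has been deleted. -/
def eraseEvent (q : ℕ) (e : Event) : Event :=
  (if e.1 ≤ q then e.1 else e.1 - 1, if e.2.1 < q then e.2.1 else e.2.1 - 1, e.2.2)

/-- Events acting only on position `q` are dropped. -/
def eraseEvents (q : ℕ) (E : List Event) : List Event :=
  E.filterMap fun e => if e.1 = q ∧ e.2.1 = q then none else some (eraseEvent q e)

lemma eraseEvents_cons_of_eq (q : ℕ) {e : Event} (E : List Event) (h : e.1 = q ∧ e.2.1 = q) :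
    eraseEvents q (e :: E) = eraseEvents q E := by
  simp [eraseEvents, h]

lemma eraseEvents_cons_of_ne (q : ℕ) {e : Event} (E : List Event) (h : ¬(e.1 = q ∧ e.2.1 = q)) :
    eraseEvents q (e :: E) = eraseEvent q e :: eraseEvents q E := by
  simp [eraseEvents, h]

lemma val_succAbove {n : ℕ} (i : Fin (n + 1)) (j : Fin n) :
    (i.succAbove j : ℕ) = if (j : ℕ) < i then (j : ℕ) else j + 1 := by
  by_cases h : (j : ℕ) < i
  · rw [succAbove_of_castSucc_lt i j h, if_pos h, val_castSucc]
  · rw [succAbove_of_le_castSucc i j (not_lt.mp h), if_neg h, val_succ]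

lemma mem_eraseEvent_iff {n : ℕ} (i : Fin (n + 1)) (e : Event) (j : Fin n) :
    ((eraseEvent (i + 1) e).1 ≤ j + 1 ∧ j + 1 ≤ (eraseEvent (i + 1) e).2.1) ↔
      (e.1 ≤ (i.succAbove j : ℕ) + 1 ∧ (i.succAbove j : ℕ) + 1 ≤ e.2.1) := by
  have hj := val_succAbove i j
  simp only [eraseEvent]
  split_ifs at hj ⊢ <;> omega

lemma removeNth_applyEvent {n : ℕ} (i : Fin (n + 1)) (u : CNP (n + 1)) (e : Event) :
    removeNth i (applyEvent u e) = applyEvent (removeNth i u) (eraseEvent (i + 1) e) := by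
  funext j
  simp only [removeNth, applyEvent, ← mem_eraseEvent_iff i e j, ← and_assoc]
  rfl

lemma removeNth_applyEvent_of_eq {n : ℕ} (i : Fin (n + 1)) (u : CNP (n + 1)) {e : Event}
    (h : e.1 = i + 1 ∧ e.2.1 = i + 1) :
    removeNth i (applyEvent u e) = removeNth i u := by
  funext j
  have hne : (i.succAbove j : ℕ) ≠ i := Fin.val_ne_of_ne (succAbove_ne i j)
  simp only [removeNth, applyEvent]
  rw [if_neg]
  omega

lemma removeNth_applySeq {n : ℕ} (i : Fin (n + 1)) (E : List Event) (u : CNP (n + 1)) :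
    applySeq (removeNth i u) (eraseEvents (i + 1) E) = removeNth i (applySeq u E) := by
  induction E generalizing u with
  | nil => rfl
  | cons e E ih =>
    by_cases h : e.1 = i + 1 ∧ e.2.1 = i + 1
    · rw [eraseEvents_cons_of_eq _ _ h, ← removeNth_applyEvent_of_eq i u h]
      exact ih _
    · rw [eraseEvents_cons_of_ne _ _ h, applySeq, List.foldl_cons,
        ← removeNth_applyEvent]
      exact ih _

lemma eventCost_eraseEvent_le {n : ℕ} (i : Fin (n + 1)) (f : ℕ → ℤ → ℕ∞) (u : CNP (n + 1))
    (e : Event) :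
    eventCost f (removeNth i u) (eraseEvent (i + 1) e) ≤ eventCost f u e := by
  refine Finset.sup_le fun j hj => ?_
  have hmem := (mem_eraseEvent_iff i e j).mp (Finset.mem_filter.mp hj).2
  exact Finset.le_sup (f := fun p => f (u p) e.2.2)
    (Finset.mem_filter.mpr ⟨Finset.mem_univ _, hmem⟩)

lemma seqCost_eraseEvents_le {n : ℕ} (i : Fin (n + 1)) (f : ℕ → ℤ → ℕ∞) (E : List Event)
    (u : CNP (n + 1)) :
    seqCost f (removeNth i u) (eraseEvents (i + 1) E) ≤ seqCost f u E := by
  induction E generalizing u with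
  | nil => simp [eraseEvents, seqCost]
  | cons e E ih =>
    by_cases h : e.1 = i + 1 ∧ e.2.1 = i + 1
    · rw [eraseEvents_cons_of_eq _ _ h, seqCost, ← removeNth_applyEvent_of_eq i u h]
      exact (ih _).trans le_add_self
    · rw [eraseEvents_cons_of_ne _ _ h, seqCost, seqCost, ← removeNth_applyEvent]
      exact add_le_add (eventCost_eraseEvent_le i f u e) (ih _)

lemma validEvent_eraseEvent {n : ℕ} (i : Fin (n + 1)) {e : Event} (he : ValidEvent (n + 1) e)
    (h : ¬(e.1 = i + 1 ∧ e.2.1 = i + 1)) :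
    ValidEvent n (eraseEvent (i + 1) e) := by
  obtain ⟨h1, h2, h3, h4⟩ := he
  have hi := i.isLt
  refine ⟨?_, ?_, ?_, h4⟩ <;> simp only [eraseEvent] <;> split_ifs <;> omega

lemma validEvent_of_mem_eraseEvents {n : ℕ} (i : Fin (n + 1)) {E : List Event}
    (hE : ∀ e ∈ E, ValidEvent (n + 1) e) {e' : Event} (he' : e' ∈ eraseEvents (i + 1) E) :
    ValidEvent n e' := by
  obtain ⟨e, he, hsome⟩ := List.mem_filterMap.mp he'
  by_cases h : e.1 = i + 1 ∧ e.2.1 = i + 1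
  · simp [h] at hsome
  · rw [if_neg h, Option.some_inj] at hsome
    exact hsome ▸ validEvent_eraseEvent i (hE e he) h

theorem stmt2_general {n : ℕ} (u v : CNP (n + 1)) (f : ℕ → ℤ → ℕ∞)
    (i : Fin (n + 1)) :
    distf f (fun j : Fin n => u (i.succAbove j)) (fun j : Fin n => v (i.succAbove j)) ≤
      distf f u v := by
  refine le_sInf ?_
  rintro c ⟨E, hE, rfl, rfl⟩
  calc distf f (removeNth i u) (removeNth i (applySeq u E))
      ≤ seqCost f (removeNth i u) (eraseEvents (i + 1) E) :=
        sInf_le ⟨_, fun _ => validEvent_of_mem_eraseEvents i hE, removeNth_applySeq i E u, rfl⟩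
    _ ≤ seqCost f u E := seqCost_eraseEvents_le i f E u

/-- removing a position from both CNPs can only decrease the `f`-distance:
`dist_f(u, v) ≥ dist_f(u^{-{i}}, v^{-{i}})`, for any cost function `f` (positive-valued). -/
theorem stmt2 {n : ℕ} (u v : CNP (n + 1)) (f : ℕ → ℤ → ℕ∞) (hf : ∀ c δ, 1 ≤ f c δ)
    (i : Fin (n + 1)) :
    distf f (fun j : Fin n => u (i.succAbove j)) (fun j : Fin n => v (i.succAbove j)) ≤
      distf f u v :=
  stmt2_general u v f i
end

section
/- Let u and v be CNPs of dimension n such that v has no null positions (v_i > 0 for all i). If a sequence of events E transforms u into v, then any amp-first reordering E' of E (i.e., a permutation of the events of E in which all amplifications precede all deletions) also transforms u into v. -/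
open scoped ENat

/-!
At a position `i` the events of `E` covering `i` act on the single count `u i` one after another,
each adding its `δ` as long as the count is positive and freezing it once it hits `0`. When `v i > 0`
the count never hit `0` along `E`, so `v i = u i + Σ δ`. Along an amp-first reordering the count first
only grows from `u i > 0` and then only shrinks towards `u i + Σ δ = v i > 0`, so it never hits `0`
either and ends at the same value.
-/

/-- The effect of one event with change `δ` on a covered count `x`. -/
def shiftPos (x : ℕ) (δ : ℤ) : ℕ := if 0 < x then ((x : ℤ) + δ).toNat else x

lemma foldl_shiftPos_zero (L : List ℤ) : L.foldl shiftPos 0 = 0 := by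
  induction L with
  | nil => rfl
  | cons δ L ih => simpa [shiftPos] using ih

lemma pos_of_foldl_shiftPos_pos {L : List ℤ} {x : ℕ} (h : 0 < L.foldl shiftPos x) : 0 < x :=
  Nat.pos_of_ne_zero fun hx => by simp [hx, foldl_shiftPos_zero] at h

lemma shiftPos_of_pos {x : ℕ} {δ : ℤ} (hx : 0 < x) (hxδ : 0 ≤ (x : ℤ) + δ) :
    (shiftPos x δ : ℤ) = x + δ := by
  simp [shiftPos, hx, hxδ]

lemma foldl_shiftPos_eq_add_sum {L : List ℤ} {x : ℕ} (h : 0 < L.foldl shiftPos x) :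
    ((L.foldl shiftPos x : ℕ) : ℤ) = x + L.sum := by
  induction L generalizing x with
  | nil => simp
  | cons δ L ih =>
    rw [List.foldl_cons] at h ⊢
    have hy : 0 < shiftPos x δ := pos_of_foldl_shiftPos_pos h
    have hx : 0 < x := pos_of_foldl_shiftPos_pos (L := [δ]) hy
    have hxδ : 0 ≤ (x : ℤ) + δ := by
      by_contra hneg
      simp [shiftPos, hx, Int.toNat_eq_zero.mpr (le_of_not_ge hneg)] at hy
    rw [ih h, shiftPos_of_pos hx hxδ, List.sum_cons]
    ring

lemma foldl_shiftPos_pos_of_nonneg {L : List ℤ} (hL : ∀ δ ∈ L, 0 ≤ δ) {x : ℕ} (hx : 0 < x) :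
    0 < L.foldl shiftPos x := by
  induction L generalizing x with
  | nil => exact hx
  | cons δ L ih =>
    have hδ := hL δ List.mem_cons_self
    have hy : 0 < shiftPos x δ := by simp [shiftPos, hx]; omega
    exact ih (fun a ha => hL a (List.mem_cons_of_mem δ ha)) hy

lemma foldl_shiftPos_pos_of_nonpos {L : List ℤ} (hL : ∀ δ ∈ L, δ ≤ 0) {x : ℕ}
    (hsum : 0 < (x : ℤ) + L.sum) : 0 < L.foldl shiftPos x := by
  induction L generalizing x with
  | nil => simpa using hsum
  | cons δ L ih =>
    have hδ := hL δ List.mem_cons_self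
    have hL' : ∀ a ∈ L, a ≤ 0 := fun a ha => hL a (List.mem_cons_of_mem δ ha)
    have hrest : L.sum ≤ 0 := by simpa using L.sum_le_card_nsmul 0 hL'
    rw [List.sum_cons] at hsum
    have hx : 0 < x := by omega
    rw [List.foldl_cons]
    exact ih hL' (by rw [shiftPos_of_pos hx (by omega)]; omega)

lemma foldl_shiftPos_append_eq_add_sum {P N : List ℤ} (hP : ∀ δ ∈ P, 0 ≤ δ)
    (hN : ∀ δ ∈ N, δ ≤ 0) {x : ℕ} (hx : 0 < x) (hsum : 0 < (x : ℤ) + (P ++ N).sum) :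
    (((P ++ N).foldl shiftPos x : ℕ) : ℤ) = x + (P ++ N).sum := by
  have hy : 0 < P.foldl shiftPos x := foldl_shiftPos_pos_of_nonneg hP hx
  have hy_eq := foldl_shiftPos_eq_add_sum hy
  have hz : 0 < N.foldl shiftPos (P.foldl shiftPos x) :=
    foldl_shiftPos_pos_of_nonpos hN (by rw [List.sum_append] at hsum; omega)
  rw [List.foldl_append, foldl_shiftPos_eq_add_sum hz, hy_eq, List.sum_append]
  ring

def deltasAt {n : ℕ} (i : Fin n) (E : List Event) : List ℤ :=
  (E.filter fun e => e.1 ≤ (i : ℕ) + 1 ∧ (i : ℕ) + 1 ≤ e.2.1).map (·.2.2)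

lemma deltasAt_append {n : ℕ} (i : Fin n) (E F : List Event) :
    deltasAt i (E ++ F) = deltasAt i E ++ deltasAt i F := by
  simp [deltasAt, List.filter_append]

lemma List.Perm.deltasAt {n : ℕ} (i : Fin n) {E F : List Event} (h : E.Perm F) :
    (_root_.deltasAt i E).Perm (_root_.deltasAt i F) :=
  (h.filter _).map _

lemma forall_mem_deltasAt {n : ℕ} (i : Fin n) {E : List Event} {p : ℤ → Prop}
    (h : ∀ e ∈ E, p e.2.2) : ∀ δ ∈ deltasAt i E, p δ := by
  simp only [deltasAt, List.mem_map, List.mem_filter]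
  rintro _ ⟨e, ⟨he, -⟩, rfl⟩
  exact h e he

lemma applyEvent_apply {n : ℕ} (u : CNP n) (e : Event) (i : Fin n) :
    applyEvent u e i =
      if e.1 ≤ (i : ℕ) + 1 ∧ (i : ℕ) + 1 ≤ e.2.1 then shiftPos (u i) e.2.2 else u i := by
  by_cases hc : e.1 ≤ (i : ℕ) + 1 ∧ (i : ℕ) + 1 ≤ e.2.1 <;>
  by_cases hu : 0 < u i <;> simp [applyEvent, shiftPos, hc, hu]

lemma applySeq_apply {n : ℕ} (u : CNP n) (E : List Event) (i : Fin n) :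
    applySeq u E i = (deltasAt i E).foldl shiftPos (u i) := by
  induction E generalizing u with
  | nil => rfl
  | cons e E ih =>
    change applySeq (applyEvent u e) E i = _
    rw [ih, applyEvent_apply]
    by_cases hc : e.1 ≤ (i : ℕ) + 1 ∧ (i : ℕ) + 1 ≤ e.2.1
    · rw [if_pos hc, deltasAt, deltasAt, List.filter_cons, if_pos (decide_eq_true hc)]
      rfl
    · rw [if_neg hc, deltasAt, deltasAt, List.filter_cons, if_neg (by simpa using hc)]

theorem stmt3_general {n : ℕ} (u v : CNP n) (hv : ∀ i, 0 < v i)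
    (E E' A D : List Event)
    (hE : applySeq u E = v)
    (hperm : E'.Perm E)
    (hE' : E' = A ++ D)
    (hA : ∀ e ∈ A, 0 < e.2.2) (hD : ∀ e ∈ D, e.2.2 < 0) :
    applySeq u E' = v := by
  subst hE'
  funext i
  have hvi : 0 < (deltasAt i E).foldl shiftPos (u i) := by
    rw [← applySeq_apply, hE]
    exact hv i
  have hvi_eq := foldl_shiftPos_eq_add_sum hvi
  have hsum : (deltasAt i (A ++ D)).sum = (deltasAt i E).sum := (hperm.deltasAt i).sum_eq
  rw [deltasAt_append] at hsum
  have hAD := foldl_shiftPos_append_eq_add_sum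
    (forall_mem_deltasAt i fun e he => (hA e he).le)
    (forall_mem_deltasAt i fun e he => (hD e he).le)
    (pos_of_foldl_shiftPos_pos hvi) (by rw [hsum, ← hvi_eq]; exact_mod_cast hvi)
  rw [← hE]
  apply Int.ofNat_inj.mp
  rw [applySeq_apply, applySeq_apply, deltasAt_append, hAD, hvi_eq, hsum]

/-- if `v` has no null positions and `E` transforms `u` into `v`, then any
amp-first reordering `E'` of `E` (a permutation with all amplifications before all deletions)
also transforms `u` into `v`. -/
theorem stmt3 {n : ℕ} (u v : CNP n) (hv : ∀ i, 0 < v i)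
    (E E' A D : List Event)
    (hEvalid : ∀ e ∈ E, ValidEvent n e)
    (hE : applySeq u E = v)
    (hperm : E'.Perm E)
    (hE' : E' = A ++ D)
    (hA : ∀ e ∈ A, 0 < e.2.2) (hD : ∀ e ∈ D, e.2.2 < 0) :
    applySeq u E' = v :=
  stmt3_general u v hv E E' A D hE hperm hE' hA hD
end

section
/- Let u and v be CNPs with no null positions, and suppose the difference vector w = u − v contains a staircase on interval [a,b] of length k = b − a + 1, meaning 0 < w_a < w_{a+1} < ... < w_b. Then for any unit-cost function f, dist_f(u,v) ≥ k. -/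
open scoped ENat

-- ==== auxiliary development ====

private def Dfun {n : ℕ} (v : CNP n) (a : Fin n) (c : CNP n) (i : Fin n) : ℤ :=
  ((c i : ℤ) - (v i : ℤ)) -
    (if (i : ℕ) = (a : ℕ) then 0
     else ((c ⟨(i : ℕ) - 1, Nat.lt_of_le_of_lt (Nat.sub_le _ _) i.isLt⟩ : ℤ)
        - (v ⟨(i : ℕ) - 1, Nat.lt_of_le_of_lt (Nat.sub_le _ _) i.isLt⟩ : ℤ)))

private def Phi {n : ℕ} (v : CNP n) (a b : Fin n) (c : CNP n) : ℕ :=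
  (Finset.univ.filter
    (fun i : Fin n => (a : ℕ) ≤ (i : ℕ) ∧ (i : ℕ) ≤ (b : ℕ) ∧ 0 < Dfun v a c i)).card

private theorem applySeq_zero {n : ℕ} (E : List Event) (c : CNP n) (j : Fin n)
    (h : c j = 0) : applySeq c E j = 0 := by
  induction E generalizing c with
  | nil => exact h
  | cons e E ih =>
      have : applyEvent c e j = 0 := by simp [applyEvent, h]
      exact ih _ this

private theorem phi_step {n : ℕ} (v : CNP n) (a b : Fin n) (c : CNP n) (e : Event)
    (hc : ∀ i, 0 < c i) (hc' : ∀ i, 0 < applyEvent c e i) :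
    Phi v a b c ≤ Phi v a b (applyEvent c e) + 1 := by
  classical
  have hval : ∀ i : Fin n, (applyEvent c e i : ℤ) =
      if e.1 ≤ (i : ℕ) + 1 ∧ (i : ℕ) + 1 ≤ e.2.1 then (c i : ℤ) + e.2.2 else (c i : ℤ) := by
    intro i
    have h1 := hc i
    have h2 := hc' i
    by_cases h : e.1 ≤ (i : ℕ) + 1 ∧ (i : ℕ) + 1 ≤ e.2.1
    · rw [if_pos h]
      have he : applyEvent c e i = ((c i : ℤ) + e.2.2).toNat := by
        simp only [applyEvent]; rw [if_pos ⟨h.1, h.2, h1⟩]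
      rw [he] at h2 ⊢
      omega
    · rw [if_neg h]
      have he : applyEvent c e i = c i := by
        simp only [applyEvent]; rw [if_neg (by tauto)]
      rw [he]
  have hsub : ∀ i j : Fin n,
      (a : ℕ) ≤ (i : ℕ) → (i : ℕ) ≤ (b : ℕ) → (a : ℕ) ≤ (j : ℕ) → (j : ℕ) ≤ (b : ℕ) →
      Dfun v a (applyEvent c e) i < Dfun v a c i →
      Dfun v a (applyEvent c e) j < Dfun v a c j → i = j := by
    intro i j hai hib haj hjb hi hj
    apply Fin.ext
    simp only [Dfun, hval] at hi hj
    split_ifs at hi hj <;> omega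
  have hPsub : (Finset.univ.filter
      (fun i : Fin n => (a : ℕ) ≤ (i : ℕ) ∧ (i : ℕ) ≤ (b : ℕ) ∧ 0 < Dfun v a c i)) ⊆
      (Finset.univ.filter
        (fun i : Fin n => (a : ℕ) ≤ (i : ℕ) ∧ (i : ℕ) ≤ (b : ℕ) ∧
          0 < Dfun v a (applyEvent c e) i)) ∪
      (Finset.univ.filter
        (fun i : Fin n => (a : ℕ) ≤ (i : ℕ) ∧ (i : ℕ) ≤ (b : ℕ) ∧
          Dfun v a (applyEvent c e) i < Dfun v a c i)) := by
    intro i hi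
    simp only [Finset.mem_filter, Finset.mem_union, Finset.mem_univ, true_and] at hi ⊢
    by_cases h : Dfun v a (applyEvent c e) i < Dfun v a c i
    · exact Or.inr ⟨hi.1, hi.2.1, h⟩
    · exact Or.inl ⟨hi.1, hi.2.1, lt_of_lt_of_le hi.2.2 (not_lt.mp h)⟩
  have hcard1 : (Finset.univ.filter
      (fun i : Fin n => (a : ℕ) ≤ (i : ℕ) ∧ (i : ℕ) ≤ (b : ℕ) ∧
        Dfun v a (applyEvent c e) i < Dfun v a c i)).card ≤ 1 := by
    apply Finset.card_le_one.mpr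
    intro x hx y hy
    simp only [Finset.mem_filter, Finset.mem_univ, true_and] at hx hy
    exact hsub x y hx.1 hx.2.1 hy.1 hy.2.1 hx.2.2 hy.2.2
  calc Phi v a b c ≤ _ := Finset.card_le_card hPsub
    _ ≤ _ + _ := Finset.card_union_le _ _
    _ ≤ Phi v a b (applyEvent c e) + 1 := by
        exact Nat.add_le_add le_rfl hcard1

private theorem phi_le_length {n : ℕ} (v : CNP n) (hv : ∀ i, 0 < v i) (a b : Fin n) :
    ∀ (E : List Event) (c : CNP n), applySeq c E = v → (∀ i, 0 < c i) →
      Phi v a b c ≤ E.length := by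
  intro E
  induction E with
  | nil =>
      intro c h _
      have hc : c = v := h
      rw [hc]
      have : Phi v a b v = 0 := by
        simp only [Phi, Finset.card_eq_zero]
        apply Finset.filter_false_of_mem
        intro i _
        simp only [Dfun]
        intro ⟨_, _, h3⟩
        split_ifs at h3 <;> omega
      omega
  | cons e E ih =>
      intro c h hc
      have h' : applySeq (applyEvent c e) E = v := h
      have hc' : ∀ i, 0 < applyEvent c e i := by
        intro i
        by_contra hcon
        have hz : applyEvent c e i = 0 := by omega
        have := applySeq_zero E _ i hz
        rw [h'] at this
        exact absurd this (by have := hv i; omega)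
      have := phi_step v a b c e hc hc'
      have := ih (applyEvent c e) h' hc'
      simp only [List.length_cons]
      omega

private theorem length_le_seqCost {n : ℕ} (f : ℕ → ℤ → ℕ∞) (hf : UnitCost f) :
    ∀ (E : List Event) (c : CNP n), (∀ e ∈ E, ValidEvent n e) →
      (E.length : ℕ∞) ≤ seqCost f c E := by
  intro E
  induction E with
  | nil => intro c _; simp [seqCost]
  | cons e E ih =>
      intro c hval
      obtain ⟨h1, h2, h3, _⟩ := hval e (by simp)
      have hlt : e.1 - 1 < n := by omega
      have hone : (1 : ℕ∞) ≤ eventCost f c e := by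
        have hmem : (⟨e.1 - 1, hlt⟩ : Fin n) ∈ Finset.univ.filter
            (fun i : Fin n => e.1 ≤ (i : ℕ) + 1 ∧ (i : ℕ) + 1 ≤ e.2.1) := by
          simp only [Finset.mem_filter, Finset.mem_univ, true_and]
          omega
        have hle := Finset.le_sup (f := fun i : Fin n => f (c i) e.2.2) hmem
        refine le_trans ?_ hle
        rcases hf (c ⟨e.1 - 1, hlt⟩) e.2.2 with h | h <;> simp [h]
      have hrest := ih (applyEvent c e) (fun e' he' => hval e' (by simp [he']))
      show ((E.length + 1 : ℕ) : ℕ∞) ≤ eventCost f c e + seqCost f (applyEvent c e) E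
      push_cast
      calc ((E.length : ℕ∞) + 1) = 1 + E.length := by rw [add_comm]
        _ ≤ eventCost f c e + seqCost f (applyEvent c e) E := add_le_add hone hrest


/-- if `u - v` contains a staircase `[a,b]` of length `k = b - a + 1`
(`0 < w_a < w_{a+1} < ... < w_b`) and `u, v` have no null positions, then
`dist_f(u, v) ≥ k` for any unit-cost function `f`. -/
theorem stmt4 {n : ℕ} (u v : CNP n) (hu : ∀ i, 0 < u i) (hv : ∀ i, 0 < v i)
    (f : ℕ → ℤ → ℕ∞) (hf : UnitCost f)
    (a b : Fin n) (hab : a ≤ b)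
    (hpos : 0 < (u a : ℤ) - (v a : ℤ))
    (hstair : ∀ i j : Fin n, a ≤ i → i < j → j ≤ b →
      (u i : ℤ) - (v i : ℤ) < (u j : ℤ) - (v j : ℤ)) :
    ((b : ℕ) - (a : ℕ) + 1 : ℕ∞) ≤ distf f u v := by
  classical
  have hphi : (b : ℕ) - (a : ℕ) + 1 ≤ Phi v a b u := by
    have hsub : Finset.Icc a b ⊆ Finset.univ.filter
        (fun i : Fin n => (a : ℕ) ≤ (i : ℕ) ∧ (i : ℕ) ≤ (b : ℕ) ∧ 0 < Dfun v a u i) := by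
      intro i hi
      rw [Finset.mem_Icc] at hi
      simp only [Finset.mem_filter, Finset.mem_univ, true_and]
      refine ⟨hi.1, hi.2, ?_⟩
      by_cases hia : (i : ℕ) = (a : ℕ)
      · have hia' : i = a := Fin.ext hia
        have hD : Dfun v a u i = (u a : ℤ) - v a := by
          rw [hia']; simp only [Dfun, eq_self_iff_true, if_true]; ring
        omega
      · have hlt : (a : ℕ) < (i : ℕ) := lt_of_le_of_ne hi.1 (Ne.symm hia)
        have hstep := hstair ⟨(i : ℕ) - 1, Nat.lt_of_le_of_lt (Nat.sub_le _ _) i.isLt⟩ i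
          (by rw [Fin.le_def]; exact (by omega : (a : ℕ) ≤ (i : ℕ) - 1))
          (by rw [Fin.lt_def]; exact (by omega : (i : ℕ) - 1 < (i : ℕ))) hi.2
        simp only [Dfun, if_neg hia]
        omega
    have hcard := Finset.card_le_card hsub
    rw [Fin.card_Icc] at hcard
    have : (a : ℕ) ≤ (b : ℕ) := hab
    simp only [Phi]
    omega
  have hmain : ∀ x ∈ { c | ∃ E : List Event, (∀ e ∈ E, ValidEvent n e) ∧
      applySeq u E = v ∧ seqCost f u E = c },
      ((b : ℕ) - (a : ℕ) + 1 : ℕ∞) ≤ x := by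
    rintro x ⟨E, hvalid, happly, hcost⟩
    have hlen : Phi v a b u ≤ E.length := phi_le_length v hv a b E u happly hu
    have hk : (b : ℕ) - (a : ℕ) + 1 ≤ E.length := le_trans hphi hlen
    have : ((b : ℕ) - (a : ℕ) + 1 : ℕ∞) ≤ (E.length : ℕ∞) := by
      have := Nat.cast_le (α := ℕ∞) |>.mpr hk
      refine le_trans (le_of_eq ?_) this
      push_cast
      rfl
    calc ((b : ℕ) - (a : ℕ) + 1 : ℕ∞) ≤ (E.length : ℕ∞) := this
      _ ≤ seqCost f u E := length_le_seqCost f hf E u hvalid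
      _ = x := hcost
  exact le_sInf hmain
end

section
/- Let u and v be CNPs of dimension n with no null positions, and let w = u − v with w_0 = w_{n+1} = 0. Then there exists a sequence of events transforming u into v of total cost at most |F_w| − 2 under the cost function any (where every event costs 1), obtained by treating each non-extreme maximal flat interval with a single event. Consequently dist_any(u,v) ≤ |F_w| − 2 whenever u ≠ v. -/
open scoped ENat

/-!
Distinct maximal flat intervals of `w = u - v` are disjoint, since two overlapping flat
intervals have a flat union, and they cover `[0, n+1]`. On a maximal flat interval `[a, b]`
with `w a ≠ 0` the single event `(a, b, -w a)` turns `u` into `v`, because all positions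
are non-null; on the others `u` already agrees with `v`. The two extreme intervals carry the
value `0` and are distinct as soon as some interval does not, so at most `|F_w| - 2` events
are used, each of cost `1`.
-/

section FlatIntervals

variable {n : ℕ} {w : ℕ → ℤ} {a b c d i : ℕ}

lemma IsFlat.union (h₁ : IsFlat n w a b) (h₂ : IsFlat n w c d) (hcb : c ≤ b) (had : a ≤ d) :
    IsFlat n w (min a c) (max b d) := by
  obtain ⟨hab, hb, hw₁⟩ := h₁
  obtain ⟨hcd, hd, hw₂⟩ := h₂
  have hcommon : ∀ k, min a c ≤ k → k ≤ max b d → w k = w (max a c) := by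
    intro k hk₁ hk₂
    by_cases hk : a ≤ k ∧ k ≤ b
    · exact hw₁ k (max a c) hk.1 hk.2 (by omega) (by omega)
    · exact hw₂ k (max a c) (by omega) (by omega) (by omega) (by omega)
  refine ⟨by omega, by omega, fun k l hk₁ hk₂ hl₁ hl₂ => ?_⟩
  rw [hcommon k hk₁ hk₂, hcommon l hl₁ hl₂]

lemma IsMaxFlat.eq_of_mem (h₁ : IsMaxFlat n w a b) (h₂ : IsMaxFlat n w c d)
    (hi₁ : a ≤ i ∧ i ≤ b) (hi₂ : c ≤ i ∧ i ≤ d) : a = c ∧ b = d := by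
  have hU := h₁.1.union h₂.1 (by omega) (by omega)
  have e₁ := h₁.2 _ _ (min_le_left a c) (le_max_left b d) hU
  have e₂ := h₂.2 _ _ (min_le_right a c) (le_max_right b d) hU
  omega

lemma exists_isMaxFlat_mem (hi : i ≤ n + 1) :
    ∃ a b, IsMaxFlat n w a b ∧ a ≤ i ∧ i ≤ b := by
  classical
  let S := (Finset.range (n + 2) ×ˢ Finset.range (n + 2)).filter
    fun p => IsFlat n w p.1 p.2 ∧ p.1 ≤ i ∧ i ≤ p.2
  have mem_S : ∀ p : ℕ × ℕ, p ∈ S ↔ IsFlat n w p.1 p.2 ∧ p.1 ≤ i ∧ i ≤ p.2 := by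
    intro p
    simp only [S, Finset.mem_filter, Finset.mem_product, Finset.mem_range, and_iff_right_iff_imp]
    rintro ⟨⟨hab, hb, -⟩, -⟩
    omega
  have hS : S.Nonempty := ⟨(i, i), (mem_S _).2
    ⟨⟨le_rfl, hi, fun k l _ _ _ _ => by rw [show k = l by omega]⟩, le_rfl, le_rfl⟩⟩
  -- a flat interval through `i` of greatest length is maximal
  obtain ⟨⟨a, b⟩, hp, hlongest⟩ := S.exists_max_image (fun p => p.2 - p.1) hS
  obtain ⟨hflat, hai, hib⟩ := (mem_S _).1 hp
  refine ⟨a, b, ⟨hflat, fun a' b' ha' hb' hflat' => ?_⟩, hai, hib⟩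
  have := hlongest (a', b') ((mem_S _).2 ⟨hflat', by omega, by omega⟩)
  have := hflat.1
  omega

variable (n w) in
open Classical in
noncomputable def maxFlats : Finset (ℕ × ℕ) :=
  (Finset.range (n + 2) ×ˢ Finset.range (n + 2)).filter fun p => IsMaxFlat n w p.1 p.2

lemma mem_maxFlats {p : ℕ × ℕ} : p ∈ maxFlats n w ↔ IsMaxFlat n w p.1 p.2 := by
  classical
  simp only [maxFlats, Finset.mem_filter, Finset.mem_product, Finset.mem_range,
    and_iff_right_iff_imp]
  rintro ⟨⟨hab, hb, -⟩, -⟩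
  omega

lemma numFlat_eq_card_maxFlats : numFlat n w = (maxFlats n w).card := by
  rw [numFlat, ← Nat.card_eq_finsetCard]
  exact Nat.card_congr (Equiv.subtypeEquivRight fun _ => mem_maxFlats.symm)

variable (n w) in
noncomputable def innerFlats : Finset (ℕ × ℕ) :=
  (maxFlats n w).filter fun p => w p.1 ≠ 0

lemma card_innerFlats_le (h₀ : w 0 = 0) (hn : w (n + 1) = 0) :
    (innerFlats n w).card ≤ numFlat n w - 2 := by
  rcases (innerFlats n w).eq_empty_or_nonempty with hempty | ⟨⟨a, b⟩, hab⟩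
  · simp [hempty]
  obtain ⟨habmax, hwa⟩ := Finset.mem_filter.1 hab
  obtain ⟨a₀, b₀, hfirst, ha₀, -⟩ :=
    exists_isMaxFlat_mem (n := n) (w := w) (Nat.zero_le _)
  obtain ⟨a₁, b₁, hlast, -, hb₁⟩ := exists_isMaxFlat_mem (n := n) (w := w) le_rfl
  have hb₁_le := hlast.1.2.1
  obtain ⟨hab_le, hb_le, -⟩ := (mem_maxFlats.1 habmax).1
  have hfirst_ne_last : (a₀, b₀) ≠ (a₁, b₁) := by
    intro heq
    obtain ⟨rfl, rfl⟩ := Prod.mk.inj heq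
    exact hwa (hfirst.1.2.2 a 0 (by omega) (by omega) (by omega) (by omega) ▸ h₀)
  have hsub : innerFlats n w ⊆ maxFlats n w \ {(a₀, b₀), (a₁, b₁)} := by
    intro p hp
    obtain ⟨hpmax, hwp⟩ := Finset.mem_filter.1 hp
    refine Finset.mem_sdiff.2 ⟨hpmax, ?_⟩
    simp only [Finset.mem_insert, Finset.mem_singleton]
    rintro (rfl | rfl)
    · exact hwp (by rw [show a₀ = 0 by omega, h₀])
    · exact hwp (by
        rw [hlast.1.2.2 _ _ le_rfl hlast.1.1 hlast.1.1 le_rfl, show b₁ = n + 1 by omega, hn])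
  have hpair : {(a₀, b₀), (a₁, b₁)} ⊆ maxFlats n w := by
    simp [Finset.insert_subset_iff, mem_maxFlats, hfirst, hlast]
  rw [numFlat_eq_card_maxFlats, ← Finset.card_pair hfirst_ne_last,
    ← Finset.card_sdiff_of_subset hpair]
  exact Finset.card_le_card hsub

end FlatIntervals

section Events

variable {n : ℕ}

def Covers (e : Event) (j : ℕ) : Prop := e.1 ≤ j ∧ j ≤ e.2.1

lemma applyEvent_apply_of_not_covers {u : CNP n} {e : Event} {i : Fin n}
    (h : ¬Covers e (i + 1)) : applyEvent u e i = u i :=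
  if_neg fun hc => h ⟨hc.1, hc.2.1⟩

lemma applyEvent_apply_of_covers {u : CNP n} {e : Event} {i : Fin n}
    (h : Covers e (i + 1)) (hu : 0 < u i) : applyEvent u e i = ((u i : ℤ) + e.2.2).toNat :=
  if_pos ⟨h.1, h.2, hu⟩

lemma applyEvent_apply_congr {u u' : CNP n} (e : Event) {i : Fin n} (h : u i = u' i) :
    applyEvent u e i = applyEvent u' e i := by
  simp only [applyEvent, h]

lemma applySeq_apply_of_forall_not_covers {u : CNP n} {E : List Event} {i : Fin n}
    (h : ∀ e ∈ E, ¬Covers e (i + 1)) : applySeq u E i = u i := by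
  induction E generalizing u with
  | nil => rfl
  | cons e E ih =>
    rw [List.forall_mem_cons] at h
    exact (ih h.2).trans (applyEvent_apply_of_not_covers h.1)

lemma applySeq_apply_of_unique_covers {u : CNP n} {E : List Event} {e : Event} {i : Fin n}
    (hE : E.Nodup) (he : e ∈ E) (huniq : ∀ f ∈ E, Covers f (i + 1) → f = e) :
    applySeq u E i = applyEvent u e i := by
  obtain ⟨L, R, rfl⟩ := List.append_of_mem he
  have heL : e ∉ L := fun h => (List.nodup_append.1 hE).2.2 e h e (by simp) rfl
  have heR : e ∉ R := (List.nodup_cons.1 (List.nodup_append.1 hE).2.1).1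
  have hL : ∀ f ∈ L, ¬Covers f (i + 1) := fun f hf hc =>
    heL (huniq f (by simp [hf]) hc ▸ hf)
  have hR : ∀ f ∈ R, ¬Covers f (i + 1) := fun f hf hc =>
    heR (huniq f (by simp [hf]) hc ▸ hf)
  rw [applySeq, List.foldl_append, List.foldl_cons, ← applySeq, ← applySeq,
    applySeq_apply_of_forall_not_covers hR]
  exact applyEvent_apply_congr e (applySeq_apply_of_forall_not_covers hL)

lemma eventCost_anyCost (u : CNP n) {e : Event} (he : ValidEvent n e) :
    eventCost anyCost u e = 1 := by
  obtain ⟨h₁, h₂, h₃, -⟩ := he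
  have hfirst : (⟨e.1 - 1, by omega⟩ : Fin n) ∈
      Finset.univ.filter fun i : Fin n => e.1 ≤ (i : ℕ) + 1 ∧ (i : ℕ) + 1 ≤ e.2.1 := by
    simp only [Finset.mem_filter, Finset.mem_univ, true_and]
    omega
  exact Finset.sup_const ⟨_, hfirst⟩ 1

lemma seqCost_anyCost (u : CNP n) {E : List Event} (hE : ∀ e ∈ E, ValidEvent n e) :
    seqCost anyCost u E = E.length := by
  induction E generalizing u with
  | nil => rfl
  | cons e E ih =>
    rw [List.forall_mem_cons] at hE
    rw [seqCost, eventCost_anyCost u hE.1, ih _ hE.2, List.length_cons, Nat.cast_succ, add_comm]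

lemma distAny_le_seqCost {u v : CNP n} {E : List Event} (hE : ∀ e ∈ E, ValidEvent n e)
    (huv : applySeq u E = v) : distAny u v ≤ seqCost anyCost u E :=
  sInf_le ⟨E, hE, huv, rfl⟩

end Events

section FlatEvents

variable {n : ℕ}

lemma diffExt_zero (u v : CNP n) : diffExt u v 0 = 0 := dif_neg (by omega)

lemma diffExt_top (u v : CNP n) : diffExt u v (n + 1) = 0 := dif_neg (by omega)

lemma diffExt_succ (u v : CNP n) (i : Fin n) : diffExt u v (i + 1) = (u i : ℤ) - v i :=
  dif_pos ⟨by omega, by omega⟩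

def flatEvent (w : ℕ → ℤ) (p : ℕ × ℕ) : Event := (p.1, p.2, -w p.1)

variable (n) in
noncomputable def flatEvents (w : ℕ → ℤ) : List Event :=
  ((innerFlats n w).image (flatEvent w)).toList

variable {w : ℕ → ℤ}

lemma mem_flatEvents {e : Event} :
    e ∈ flatEvents n w ↔ ∃ p ∈ innerFlats n w, flatEvent w p = e := by
  simp [flatEvents]

lemma nodup_flatEvents : (flatEvents n w).Nodup := Finset.nodup_toList _

lemma validEvent_of_mem_flatEvents (h₀ : w 0 = 0) (hn : w (n + 1) = 0) {e : Event}
    (he : e ∈ flatEvents n w) : ValidEvent n e := by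
  obtain ⟨⟨a, b⟩, hp, rfl⟩ := mem_flatEvents.1 he
  obtain ⟨hmax, hwa⟩ := Finset.mem_filter.1 hp
  obtain ⟨hab, hb, hflat⟩ := (mem_maxFlats.1 hmax).1
  have ha₀ : a ≠ 0 := by rintro rfl; exact hwa h₀
  have hbn : b ≠ n + 1 := by
    rintro rfl; exact hwa (hflat a (n + 1) le_rfl hab hab le_rfl ▸ hn)
  exact ⟨Nat.one_le_iff_ne_zero.2 ha₀, hab, show b ≤ n by omega, neg_ne_zero.2 hwa⟩

lemma length_flatEvents_le (h₀ : w 0 = 0) (hn : w (n + 1) = 0) :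
    (flatEvents n w).length ≤ numFlat n w - 2 := by
  rw [flatEvents, Finset.length_toList]
  exact Finset.card_image_le.trans (card_innerFlats_le h₀ hn)

lemma applySeq_flatEvents {u v : CNP n} (hu : ∀ i, 0 < u i) :
    applySeq u (flatEvents n (diffExt u v)) = v := by
  funext i
  set w := diffExt u v
  obtain ⟨a, b, hab, hai, hib⟩ := exists_isMaxFlat_mem (n := n) (w := w) (i := i + 1) (by omega)
  have hwi : w (i + 1) = w a := hab.1.2.2 _ _ hai hib le_rfl hab.1.1
  have hdiff : w (i + 1) = (u i : ℤ) - v i := diffExt_succ u v i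
  have hcovers : ∀ f ∈ flatEvents n w, Covers f (i + 1) →
      f = flatEvent w (a, b) ∧ w a ≠ 0 := by
    intro f hf hcov
    obtain ⟨⟨c, d⟩, hcd, rfl⟩ := mem_flatEvents.1 hf
    obtain ⟨hcdmax, hwc⟩ := Finset.mem_filter.1 hcd
    obtain ⟨rfl, rfl⟩ := (mem_maxFlats.1 hcdmax).eq_of_mem hab hcov ⟨hai, hib⟩
    exact ⟨rfl, hwc⟩
  by_cases hwa : w a = 0
  · rw [applySeq_apply_of_forall_not_covers fun f hf hcov => (hcovers f hf hcov).2 hwa]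
    omega
  · have hmem : flatEvent w (a, b) ∈ flatEvents n w :=
      mem_flatEvents.2 ⟨(a, b), Finset.mem_filter.2 ⟨mem_maxFlats.2 hab, hwa⟩, rfl⟩
    rw [applySeq_apply_of_unique_covers nodup_flatEvents hmem
      fun f hf hcov => (hcovers f hf hcov).1, applyEvent_apply_of_covers ⟨hai, hib⟩ (hu i)]
    simp only [flatEvent]
    omega

end FlatEvents

theorem stmt6_general {n : ℕ} (u v : CNP n)
    (hu : ∀ i, 0 < u i) :
    (∃ E : List Event, (∀ e ∈ E, ValidEvent n e) ∧ applySeq u E = v ∧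
      seqCost anyCost u E ≤ ((numFlat n (diffExt u v) - 2 : ℕ) : ℕ∞)) ∧
    distAny u v ≤ ((numFlat n (diffExt u v) - 2 : ℕ) : ℕ∞) := by
  have h₀ := diffExt_zero u v
  have hn := diffExt_top u v
  have hvalid : ∀ e ∈ flatEvents n (diffExt u v), ValidEvent n e :=
    fun _ => validEvent_of_mem_flatEvents h₀ hn
  have hcost : seqCost anyCost u (flatEvents n (diffExt u v)) ≤
      ((numFlat n (diffExt u v) - 2 : ℕ) : ℕ∞) := by
    rw [seqCost_anyCost u hvalid]
    exact_mod_cast length_flatEvents_le h₀ hn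
  exact ⟨⟨_, hvalid, applySeq_flatEvents hu, hcost⟩,
    (distAny_le_seqCost hvalid (applySeq_flatEvents hu)).trans hcost⟩

/-- for CNPs with no null positions and `u ≠ v`, there is a sequence of events
transforming `u` into `v` of total cost at most `|F_w| - 2` under the `any` cost function
(one event per non-extreme maximal flat interval of `w = u - v`); hence
`dist_any(u,v) ≤ |F_w| - 2`. -/
theorem stmt6 {n : ℕ} (u v : CNP n) (huv : u ≠ v)
    (hu : ∀ i, 0 < u i) (hv : ∀ i, 0 < v i) :
    (∃ E : List Event, (∀ e ∈ E, ValidEvent n e) ∧ applySeq u E = v ∧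
      seqCost anyCost u E ≤ ((numFlat n (diffExt u v) - 2 : ℕ) : ℕ∞)) ∧
    distAny u v ≤ ((numFlat n (diffExt u v) - 2 : ℕ) : ℕ∞) :=
  stmt6_general u v hu
end
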